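/- arXiv:2403.05366 — 5 statements merged into one kernel-verified Lean document; each statement's English description precedes it below -/
import Mathlib

section
/- Let (Ω,F,P) be a probability space, E ∈ F an event, and let X, X', Y, Y' be real-valued random variables such that X = X' almost surely on E, Y = Y' almost surely on E, and X' and Y' are independent. Then for all x, y ∈ ℝ, |P(X ≤ x and Y ≤ y) − P(X ≤ x)·P(Y ≤ y)| ≤ 6·P(Eᶜ). -/
open MeasureTheory

lemma key_le {Ω : Type*} [MeasurableSpace Ω] (P : Measure Ω) [IsFiniteMeasure P]
    (N1 N2 C A B : Set Ω) (h1 : P N1 = 0) (h2 : P N2 = 0)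
    (hAB : A \ B ⊆ N1 ∪ N2 ∪ C) (hBA : B \ A ⊆ N1 ∪ N2 ∪ C) :
    |(P A).toReal - (P B).toReal| ≤ (P C).toReal := by
  have hcov : P (N1 ∪ N2 ∪ C) ≤ P C := by
    calc P (N1 ∪ N2 ∪ C) ≤ P (N1 ∪ N2) + P C := measure_union_le _ _
      _ ≤ P N1 + P N2 + P C := by gcongr; exact measure_union_le _ _
      _ = P C := by rw [h1, h2]; simp
  have step : ∀ S T : Set Ω, S \ T ⊆ N1 ∪ N2 ∪ C → P S ≤ P T + P C := by
    intro S T hST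
    calc P S ≤ P (T ∪ (S \ T)) := measure_mono (by
        intro ω hω
        by_cases h : ω ∈ T
        exacts [Or.inl h, Or.inr ⟨hω, h⟩])
      _ ≤ P T + P (S \ T) := measure_union_le _ _
      _ ≤ P T + P C := add_le_add le_rfl (le_trans (measure_mono hST) hcov)
  have hA := step A B hAB
  have hB := step B A hBA
  have hne : P B + P C ≠ ⊤ := ENNReal.add_ne_top.mpr ⟨measure_ne_top _ _, measure_ne_top _ _⟩
  have hne' : P A + P C ≠ ⊤ := ENNReal.add_ne_top.mpr ⟨measure_ne_top _ _, measure_ne_top _ _⟩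
  have tA := ENNReal.toReal_mono hne hA
  have tB := ENNReal.toReal_mono hne' hB
  rw [ENNReal.toReal_add (measure_ne_top _ _) (measure_ne_top _ _)] at tA tB
  rw [abs_sub_le_iff]
  constructor <;> linarith

theorem stmt0 {Ω : Type*} [MeasurableSpace Ω] (P : Measure Ω) [IsProbabilityMeasure P]
    (E : Set Ω) (hE : MeasurableSet E)
    (X X' Y Y' : Ω → ℝ)
    (hX : Measurable X) (hX' : Measurable X') (hY : Measurable Y) (hY' : Measurable Y')
    (hXE : P ({ω | X ω ≠ X' ω} ∩ E) = 0)
    (hYE : P ({ω | Y ω ≠ Y' ω} ∩ E) = 0)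
    (hindep : ProbabilityTheory.IndepFun X' Y' P)
    (x y : ℝ) :
    |(P {ω | X ω ≤ x ∧ Y ω ≤ y}).toReal -
      (P {ω | X ω ≤ x}).toReal * (P {ω | Y ω ≤ y}).toReal| ≤ 6 * (P Eᶜ).toReal := by
  set N1 : Set Ω := {ω | X ω ≠ X' ω} ∩ E
  set N2 : Set Ω := {ω | Y ω ≠ Y' ω} ∩ E
  -- cover lemma for single variable
  have covX : ∀ S T : Set ℝ, (∀ ω, X ω ∈ S ↔ X ω ∈ T) →
      True := fun _ _ _ => trivial
  have hsub : ∀ ω : Ω, X ω ≠ X' ω ∨ Y ω ≠ Y' ω → ω ∈ N1 ∪ N2 ∪ Eᶜ := by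
    intro ω h
    by_cases hω : ω ∈ E
    · rcases h with h | h
      · exact Or.inl (Or.inl ⟨h, hω⟩)
      · exact Or.inl (Or.inr ⟨h, hω⟩)
    · exact Or.inr hω
  have d1 : |(P {ω | X ω ≤ x ∧ Y ω ≤ y}).toReal - (P {ω | X' ω ≤ x ∧ Y' ω ≤ y}).toReal|
      ≤ (P Eᶜ).toReal := by
    apply key_le P N1 N2 Eᶜ _ _ hXE hYE
    · intro ω ⟨h1, h2⟩
      apply hsub
      by_contra hc
      push_neg at hc
      exact h2 ⟨hc.1 ▸ h1.1, hc.2 ▸ h1.2⟩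
    · intro ω ⟨h1, h2⟩
      apply hsub
      by_contra hc
      push_neg at hc
      exact h2 ⟨hc.1 ▸ h1.1, hc.2 ▸ h1.2⟩
  have d2 : |(P {ω | X ω ≤ x}).toReal - (P {ω | X' ω ≤ x}).toReal| ≤ (P Eᶜ).toReal := by
    apply key_le P N1 N2 Eᶜ _ _ hXE hYE
    · intro ω ⟨h1, h2⟩
      apply hsub
      exact Or.inl (fun hc => h2 (show X' ω ≤ x from hc ▸ h1))
    · intro ω ⟨h1, h2⟩
      apply hsub
      exact Or.inl (fun hc => h2 (show X ω ≤ x from hc ▸ h1))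
  have d3 : |(P {ω | Y ω ≤ y}).toReal - (P {ω | Y' ω ≤ y}).toReal| ≤ (P Eᶜ).toReal := by
    apply key_le P N1 N2 Eᶜ _ _ hXE hYE
    · intro ω ⟨h1, h2⟩
      apply hsub
      exact Or.inr (fun hc => h2 (show Y' ω ≤ y from hc ▸ h1))
    · intro ω ⟨h1, h2⟩
      apply hsub
      exact Or.inr (fun hc => h2 (show Y ω ≤ y from hc ▸ h1))
  -- independence
  have hind : P {ω | X' ω ≤ x ∧ Y' ω ≤ y} = P {ω | X' ω ≤ x} * P {ω | Y' ω ≤ y} := by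
    have := hindep.measure_inter_preimage_eq_mul (s := Set.Iic x) (t := Set.Iic y)
      measurableSet_Iic measurableSet_Iic
    simpa [Set.preimage, Set.inter_def, Set.mem_Iic] using this
  set a := (P {ω | X ω ≤ x}).toReal
  set b := (P {ω | Y ω ≤ y}).toReal
  set a' := (P {ω | X' ω ≤ x}).toReal
  set b' := (P {ω | Y' ω ≤ y}).toReal
  have hind' : (P {ω | X' ω ≤ x ∧ Y' ω ≤ y}).toReal = a' * b' := by
    rw [hind, ENNReal.toReal_mul]
  have ha : 0 ≤ a ∧ a ≤ 1 := ⟨ENNReal.toReal_nonneg, by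
    apply ENNReal.toReal_le_of_le_ofReal zero_le_one
    simpa using prob_le_one⟩
  have hb' : 0 ≤ b' ∧ b' ≤ 1 := ⟨ENNReal.toReal_nonneg, by
    apply ENNReal.toReal_le_of_le_ofReal zero_le_one
    simpa using prob_le_one⟩
  have prod_bound : |a' * b' - a * b| ≤ |a' - a| + |b' - b| := by
    have h1 : a' * b' - a * b = (a' - a) * b' + a * (b' - b) := by ring
    rw [h1]
    calc |(a' - a) * b' + a * (b' - b)| ≤ |(a' - a) * b'| + |a * (b' - b)| := abs_add_le _ _
      _ = |a' - a| * |b'| + |a| * |b' - b| := by rw [abs_mul, abs_mul]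
      _ ≤ |a' - a| * 1 + 1 * |b' - b| := by
          gcongr
          · rw [abs_of_nonneg hb'.1]; exact hb'.2
          · rw [abs_of_nonneg ha.1]; exact ha.2
      _ = |a' - a| + |b' - b| := by ring
  have := abs_sub_abs_le_abs_sub (a' * b') (a * b)
  calc |(P {ω | X ω ≤ x ∧ Y ω ≤ y}).toReal - a * b|
      ≤ |(P {ω | X ω ≤ x ∧ Y ω ≤ y}).toReal - (P {ω | X' ω ≤ x ∧ Y' ω ≤ y}).toReal|
        + |(P {ω | X' ω ≤ x ∧ Y' ω ≤ y}).toReal - a * b| := abs_sub_le _ _ _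
    _ = |(P {ω | X ω ≤ x ∧ Y ω ≤ y}).toReal - (P {ω | X' ω ≤ x ∧ Y' ω ≤ y}).toReal|
        + |a' * b' - a * b| := by rw [hind']
    _ ≤ (P Eᶜ).toReal + (|a' - a| + |b' - b|) := add_le_add d1 prod_bound
    _ ≤ (P Eᶜ).toReal + ((P Eᶜ).toReal + (P Eᶜ).toReal) := by
        gcongr
        · rw [abs_sub_comm]; exact d2
        · rw [abs_sub_comm]; exact d3
    _ ≤ 6 * (P Eᶜ).toReal := by
        have : (0:ℝ) ≤ (P Eᶜ).toReal := ENNReal.toReal_nonneg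
        linarith
end

section
/- Let m ≥ 1 be an integer, let (uₙ)₁≤n≤m be a sequence of reals with uₙ < uₙ₊₁ for all n, and let h : {0, 1, …, 2^m} → ℝ be any function (thought of as values at dyadic points k·2^{−m}). Suppose h(0) ≤ u₁ and h(2^m) ≤ u₁, and suppose there exists k ∈ {0, …, 2^m − 1} with h(k) > u_m. Then either h(2^{m−1}) > u₁, or there exist n ∈ {2, …, m} and an odd integer k' ∈ {1, …, 2^n − 1} such that h(k'·2^{m−n}) > uₙ while h((k'−1)·2^{m−n}) ≤ uₙ₋₁ and h((k'+1)·2^{m−n}) ≤ uₙ₋₁. -/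
theorem stmt5 (m : ℕ) (hm : 1 ≤ m) (u : ℕ → ℝ)
    (hu : ∀ n : ℕ, 1 ≤ n → n < m → u n < u (n + 1))
    (h : ℕ → ℝ)
    (h0 : h 0 ≤ u 1) (hT : h (2 ^ m) ≤ u 1)
    (hex : ∃ k < 2 ^ m, u m < h k) :
    u 1 < h (2 ^ (m - 1)) ∨
      ∃ n : ℕ, 2 ≤ n ∧ n ≤ m ∧ ∃ k' : ℕ, Odd k' ∧ 1 ≤ k' ∧ k' ≤ 2 ^ n - 1 ∧
        u n < h (k' * 2 ^ (m - n)) ∧ h ((k' - 1) * 2 ^ (m - n)) ≤ u (n - 1) ∧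
        h ((k' + 1) * 2 ^ (m - n)) ≤ u (n - 1) := by
  classical
  have hmono : ∀ a b : ℕ, 1 ≤ a → a ≤ b → b ≤ m → u a ≤ u b := by
    intro a b ha hab hbm
    induction b with
    | zero => omega
    | succ c ih =>
      rcases Nat.eq_or_lt_of_le hab with heq | hlt
      · exact le_of_eq (by rw [heq])
      · have h1 := ih (by omega) (by omega)
        have h2 : u c < u (c + 1) := hu c (by omega) (by omega)
        linarith
  set Q : ℕ → Prop := fun n => 1 ≤ n ∧ ∃ j, 1 ≤ j ∧ j < 2 ^ n ∧ u n < h (j * 2 ^ (m - n))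
    with hQ
  have hQm : Q m := by
    obtain ⟨k, hk, hkgt⟩ := hex
    refine ⟨hm, k, ?_, hk, by simpa using hkgt⟩
    by_contra hk0
    have hk0' : k = 0 := by omega
    subst hk0'
    have : u 1 ≤ u m := hmono 1 m le_rfl hm le_rfl
    linarith
  have hex' : ∃ n, Q n := ⟨m, hQm⟩
  set N := Nat.find hex' with hNdef
  have hQN : Q N := Nat.find_spec hex'
  obtain ⟨hN1, j, hj1, hjlt, hjgt⟩ := hQN
  have hNm : N ≤ m := Nat.find_min' hex' hQm
  rcases Nat.eq_or_lt_of_le hN1 with h1 | h2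
  · -- N = 1
    left
    have hN1' : N = 1 := h1.symm
    rw [hN1'] at hjlt hjgt
    have hj : j = 1 := by omega
    subst hj
    simpa using hjgt
  · -- N ≥ 2
    right
    have hN2 : 2 ≤ N := h2
    have hnotQ : ¬ Q (N - 1) := Nat.find_min hex' (by omega)
    have huu : u (N - 1) < u N := by
      have := hu (N - 1) (by omega) (by omega)
      rwa [Nat.sub_add_cancel (by omega : 1 ≤ N)] at this
    have key : ∀ a, a ≤ 2 ^ (N - 1) → h (a * 2 ^ (m - (N - 1))) ≤ u (N - 1) := by
      intro a ha
      rcases Nat.eq_or_lt_of_le ha with hEq | hLt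
      · have he : a * 2 ^ (m - (N - 1)) = 2 ^ m := by
          rw [hEq, ← pow_add]
          congr 1
          omega
        rw [he]
        exact le_trans hT (hmono 1 (N - 1) le_rfl (by omega) (by omega))
      · rcases Nat.eq_zero_or_pos a with h0a | h1a
        · subst h0a
          simpa using le_trans h0 (hmono 1 (N - 1) le_rfl (by omega) (by omega))
        · by_contra hcon
          push_neg at hcon
          exact hnotQ ⟨by omega, a, h1a, hLt, hcon⟩
    have h2N : 2 ^ N = 2 ^ (N - 1) * 2 := by
      rw [← pow_succ]
      congr 1
      omega
    have hm3 : m - (N - 1) = (m - N) + 1 := by omega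
    have hodd : Odd j := by
      rcases Nat.even_or_odd j with he | ho
      · exfalso
        obtain ⟨a, ha⟩ := he
        have hpt : j * 2 ^ (m - N) = a * 2 ^ (m - (N - 1)) := by
          rw [hm3, pow_succ]
          have hja : j = 2 * a := by omega
          rw [hja]; ring
        have hk := key a (by omega)
        rw [hpt] at hjgt
        linarith
      · exact ho
    obtain ⟨c, hc⟩ := hodd
    have e1 : (j - 1) * 2 ^ (m - N) = c * 2 ^ (m - (N - 1)) := by
      rw [hm3, pow_succ]
      have hj1' : j - 1 = 2 * c := by omega
      rw [hj1']; ring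
    have e2 : (j + 1) * 2 ^ (m - N) = (c + 1) * 2 ^ (m - (N - 1)) := by
      rw [hm3, pow_succ]
      have hj2' : j + 1 = 2 * (c + 1) := by omega
      rw [hj2']; ring
    refine ⟨N, hN2, hNm, j, ⟨c, hc⟩, hj1, by omega, hjgt, ?_, ?_⟩
    · rw [e1]; exact key c (by omega)
    · rw [e2]; exact key (c + 1) (by omega)
end

section
/- Let (Xₙ) and (Yₙ) be sequences of real random variables on a common probability space with Xₙ ≤ Yₙ almost surely for each n. Suppose Xₙ and Yₙ both converge in distribution to the same limit law μ as n → ∞. Then Yₙ − Xₙ converges to 0 in probability. -/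
open MeasureTheory Filter
open scoped NNReal ENNReal

lemma stmt7_compl_toReal {Ω : Type*} [MeasurableSpace Ω] (Q : Measure Ω) [IsProbabilityMeasure Q]
    {s : Set Ω} (hs : MeasurableSet s) : (Q sᶜ).toReal = 1 - (Q s).toReal := by
  rw [measure_compl hs (measure_ne_top _ _),
    ENNReal.toReal_sub_of_le (measure_mono (Set.subset_univ _)) (measure_ne_top _ _),
    measure_univ, ENNReal.toReal_one]

/-- Weak convergence implies convergence of the (real-valued) measures of every set whose
frontier is null for the limit. -/
lemma stmt7_tendsto_apply (ν : ℕ → ProbabilityMeasure ℝ) (μ : ProbabilityMeasure ℝ)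
    (h : Tendsto ν atTop (nhds μ)) {s : Set ℝ} (hs : (μ : Measure ℝ) (frontier s) = 0) :
    Tendsto (fun n => ((ν n : Measure ℝ) s).toReal) atTop
      (nhds (((μ : Measure ℝ) s).toReal)) :=
  (ENNReal.tendsto_toReal (measure_ne_top _ _)).comp
    (ProbabilityMeasure.tendsto_measure_of_null_frontier_of_tendsto' h hs)

theorem stmt7 {Ω : Type*} [MeasurableSpace Ω] (P : Measure Ω) [IsProbabilityMeasure P]
    (X Y : ℕ → Ω → ℝ) (hXm : ∀ n, Measurable (X n)) (hYm : ∀ n, Measurable (Y n))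
    (hle : ∀ n, ∀ᵐ ω ∂P, X n ω ≤ Y n ω)
    (μ : ProbabilityMeasure ℝ)
    (hX : Tendsto (β := ProbabilityMeasure ℝ)
      (fun n => (⟨P.map (X n), Measure.isProbabilityMeasure_map (hXm n).aemeasurable⟩ :
        ProbabilityMeasure ℝ)) atTop (nhds μ))
    (hY : Tendsto (β := ProbabilityMeasure ℝ)
      (fun n => (⟨P.map (Y n), Measure.isProbabilityMeasure_map (hYm n).aemeasurable⟩ :
        ProbabilityMeasure ℝ)) atTop (nhds μ)) :
    TendstoInMeasure P (fun n ω => Y n ω - X n ω) atTop (fun _ => 0) := by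
  classical
  intro εE hεE
  rcases eq_or_ne εE ⊤ with hEtop | hEtop
  · simp [hEtop, edist_ne_top]
  obtain ⟨εr, hεrdef⟩ : ∃ r : ℝ, r = εE.toReal := ⟨_, rfl⟩
  have hεr : 0 < εr := hεrdef ▸ ENNReal.toReal_pos hεE.ne' hEtop
  have hsubE : ∀ n, {x | εE ≤ edist (Y n x - X n x) (0 : ℝ)} ⊆
      {x | εr ≤ dist (Y n x - X n x) (0 : ℝ)} := by
    intro n x hx
    simp only [Set.mem_setOf_eq, edist_dist] at hx ⊢
    rw [hεrdef]
    exact ENNReal.toReal_le_of_le_ofReal dist_nonneg hx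
  refine tendsto_of_tendsto_of_tendsto_of_le_of_le tendsto_const_nhds ?_ (fun _ => zero_le)
    (fun n => measure_mono (hsubE n))
  set μm : Measure ℝ := (μ : Measure ℝ) with hμm
  haveI : IsProbabilityMeasure μm := μ.2
  have key : ∀ δ : ℝ, 0 < δ → ∀ᶠ n in atTop,
      P {x | εr ≤ dist (Y n x - X n x) (0 : ℝ)} ≤ ENNReal.ofReal (2 * δ) := by
    intro δ hδ
    -- tails
    obtain ⟨a, ha⟩ : ∃ a, ProbabilityTheory.cdf μm a < δ :=
      ((ProbabilityTheory.tendsto_cdf_atBot μm).eventually_lt_const hδ).exists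
    obtain ⟨a', ha'⟩ : ∃ a', 1 - δ < ProbabilityTheory.cdf μm a' :=
      ((ProbabilityTheory.tendsto_cdf_atTop μm).eventually_const_lt (by linarith)).exists
    set η : ℝ := εr / 2 with hηdef
    have hη : 0 < η := by positivity
    obtain ⟨c, hc, hcnull⟩ : ∃ c ∈ Set.Ioo (0:ℝ) η, ∀ i : ℕ, μm {a - c + i * η - η} = 0 := by
      have hS : {t : ℝ | 0 < μm {t}}.Countable :=
        Measure.countable_meas_pos_of_disjoint_iUnion (fun t => measurableSet_singleton t)
          (fun s t hst => Set.disjoint_singleton.2 hst)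
      set bad : Set ℝ := ⋃ i : ℕ, (fun t => a + i * η - η - t) '' {t : ℝ | 0 < μm {t}} with hbad
      have hbadc : bad.Countable := Set.countable_iUnion fun i => hS.image _
      have hne : ∃ c ∈ Set.Ioo (0:ℝ) η, c ∉ bad := by
        by_contra hcon
        push_neg at hcon
        have h1 : MeasureTheory.volume (Set.Ioo (0:ℝ) η) ≤ MeasureTheory.volume bad :=
          measure_mono hcon
        rw [hbadc.measure_zero, Real.volume_Ioo] at h1
        simp at h1
        linarith
      obtain ⟨c, hc1, hc2⟩ := hne
      refine ⟨c, hc1, fun i => ?_⟩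
      by_contra hpos
      apply hc2
      exact Set.mem_iUnion.2 ⟨i, a - c + i * η - η, pos_iff_ne_zero.2 hpos, by ring⟩
    set b : ℕ → ℝ := fun i => a - c + i * η - η with hb
    have hbnull : ∀ i, μm {b i} = 0 := hcnull
    set K : ℕ := ⌈(a' - a) / η⌉₊ + 2 with hKdef
    have hbKa' : a' ≤ b K := by
      have h1 : (a' - a) / η ≤ (⌈(a' - a) / η⌉₊ : ℝ) := Nat.le_ceil _
      have h2 : (a' - a) / η * η = a' - a := div_mul_cancel₀ _ hη.ne'
      have h3 := mul_le_mul_of_nonneg_right h1 hη.le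
      have h5 : ((K : ℕ) : ℝ) = (⌈(a' - a) / η⌉₊ : ℝ) + 2 := by
        rw [hKdef]; push_cast; ring
      have hc2 := hc.2
      show a' ≤ a - c + (K : ℝ) * η - η
      nlinarith
    have hb0a : b 0 < a := by
      have hc1 := hc.1
      show a - c + (0 : ℕ) * η - η < a
      push_cast
      linarith
    -- sets
    set A : ℕ → Set Ω := fun n => {ω | X n ω ≤ b 0} with hA
    set B : ℕ → Set Ω := fun n => {ω | b K < Y n ω} with hB
    set C : ℕ → ℕ → Set Ω := fun n j => {ω | X n ω ≤ b j ∧ b j < Y n ω} with hC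
    -- a.e. inclusion
    have hsub : ∀ n, ({x | εr ≤ dist (Y n x - X n x) (0 : ℝ)} : Set Ω)
        ≤ᵐ[P] ((A n ∪ B n ∪ ⋃ j ∈ (Finset.Icc 1 K : Finset ℕ), C n j) : Set Ω) := by
      intro n
      filter_upwards [hle n] with ω hXY hmem
      have hdist : εr ≤ Y n ω - X n ω := by
        have hmem' : εr ≤ |Y n ω - X n ω| := by
          have h' : εr ≤ dist (Y n ω - X n ω) (0 : ℝ) := hmem
          simpa [Real.dist_eq] using h'
        rwa [abs_of_nonneg (by linarith)] at hmem'
      by_cases h0 : X n ω ≤ b 0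
      · exact Or.inl (Or.inl h0)
      by_cases hK2 : b K < X n ω
      · exact Or.inl (Or.inr (lt_of_lt_of_le hK2 hXY))
      · push_neg at h0 hK2
        right
        have hne : ∃ j, X n ω ≤ b j := ⟨K, hK2⟩
        set j := Nat.find hne with hj
        have hjspec : X n ω ≤ b j := Nat.find_spec hne
        have hjK : j ≤ K := Nat.find_min' hne hK2
        have hj0 : j ≠ 0 := by
          intro h; rw [h] at hjspec; exact absurd hjspec (not_le.2 h0)
        have hprev : ¬ X n ω ≤ b (j - 1) := Nat.find_min hne (by omega)
        push_neg at hprev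
        have hcast : ((j - 1 : ℕ) : ℝ) = (j : ℝ) - 1 := by
          have h1 : 1 ≤ j := Nat.one_le_iff_ne_zero.2 hj0
          push_cast [Nat.cast_sub h1]; ring
        have hY2 : b j < Y n ω := by
          have hgap : b j = b (j - 1) + η := by
            show a - c + (j : ℝ) * η - η = (a - c + ((j - 1 : ℕ) : ℝ) * η - η) + η
            rw [hcast]; ring
          have hεη : εr = η + η := by rw [hηdef]; ring
          have := hprev
          nlinarith
        refine Set.mem_biUnion ?_ ⟨hjspec, hY2⟩
        exact Finset.mem_coe.mpr (Finset.mem_Icc.2 ⟨by omega, hjK⟩)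
    -- real-valued distribution functions
    set F : ℕ → ℝ → ℝ := fun n t => ((P.map (X n)) (Set.Iic t)).toReal with hF
    set G : ℕ → ℝ → ℝ := fun n t => ((P.map (Y n)) (Set.Iic t)).toReal with hG
    set Hn : ℕ → ℝ := fun n => ((P.map (Y n)) (Set.Ioi (b K))).toReal with hHn
    have hFnn : ∀ n t, 0 ≤ F n t := fun n t => ENNReal.toReal_nonneg
    have hGnn : ∀ n t, 0 ≤ G n t := fun n t => ENNReal.toReal_nonneg
    have hHnn : ∀ n, 0 ≤ Hn n := fun n => ENNReal.toReal_nonneg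
    have hPX : ∀ n t, P {ω | X n ω ≤ t} = ENNReal.ofReal (F n t) := by
      intro n t
      rw [hF, ENNReal.ofReal_toReal (measure_ne_top _ _),
        Measure.map_apply (hXm n) measurableSet_Iic]
      rfl
    have hPY : ∀ n t, P {ω | Y n ω ≤ t} = ENNReal.ofReal (G n t) := by
      intro n t
      rw [hG, ENNReal.ofReal_toReal (measure_ne_top _ _),
        Measure.map_apply (hYm n) measurableSet_Iic]
      rfl
    have hPB : ∀ n, P (B n) = ENNReal.ofReal (Hn n) := by
      intro n
      rw [hHn, ENNReal.ofReal_toReal (measure_ne_top _ _),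
        Measure.map_apply (hYm n) measurableSet_Ioi]
      rfl
    have hCb : ∀ n j, P (C n j) + ENNReal.ofReal (G n (b j)) ≤ ENNReal.ofReal (F n (b j)) := by
      intro n j
      rw [← hPY n (b j), ← hPX n (b j)]
      have hdisj : Disjoint (C n j) {ω | Y n ω ≤ b j} := by
        rw [Set.disjoint_left]
        intro ω h1 h2
        exact absurd h1.2 (not_lt.2 h2)
      have hmeas : MeasurableSet {ω | Y n ω ≤ b j} := measurableSet_le (hYm n) measurable_const
      have hN : P {ω | ¬ X n ω ≤ Y n ω} = 0 := by
        have := hle n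
        rwa [MeasureTheory.ae_iff] at this
      calc P (C n j) + P {ω | Y n ω ≤ b j} = P (C n j ∪ {ω | Y n ω ≤ b j}) :=
            (measure_union hdisj hmeas).symm
        _ ≤ P ({ω | X n ω ≤ b j} ∪ {ω | ¬ X n ω ≤ Y n ω}) := by
            apply measure_mono
            rintro ω (h1 | h2)
            · exact Or.inl h1.1
            · by_cases hxy : X n ω ≤ Y n ω
              · exact Or.inl (le_trans hxy h2)
              · exact Or.inr hxy
        _ ≤ P {ω | X n ω ≤ b j} + P {ω | ¬ X n ω ≤ Y n ω} := measure_union_le _ _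
        _ = P {ω | X n ω ≤ b j} := by rw [hN, add_zero]
    have hGF : ∀ n j, G n (b j) ≤ F n (b j) := by
      intro n j
      have h1 : ENNReal.ofReal (G n (b j)) ≤ ENNReal.ofReal (F n (b j)) :=
        le_trans le_add_self (hCb n j)
      exact (ENNReal.ofReal_le_ofReal_iff (hFnn n (b j))).1 h1
    have hCb' : ∀ n j, P (C n j) ≤ ENNReal.ofReal (F n (b j) - G n (b j)) := by
      intro n j
      rw [ENNReal.ofReal_sub _ (hGnn n (b j))]
      exact ENNReal.le_sub_of_add_le_right ENNReal.ofReal_ne_top (hCb n j)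
    -- per-n bound
    have hPE : ∀ n, P {x | εr ≤ dist (Y n x - X n x) (0 : ℝ)} ≤
        ENNReal.ofReal (F n (b 0) + Hn n +
          ∑ j ∈ Finset.Icc 1 K, (F n (b j) - G n (b j))) := by
      intro n
      calc P {x | εr ≤ dist (Y n x - X n x) (0 : ℝ)}
          ≤ P (A n ∪ B n ∪ ⋃ j ∈ (Finset.Icc 1 K : Finset ℕ), C n j) :=
            measure_mono_ae (hsub n)
        _ ≤ P (A n ∪ B n) + P (⋃ j ∈ (Finset.Icc 1 K : Finset ℕ), C n j) :=
            measure_union_le _ _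
        _ ≤ (P (A n) + P (B n)) + ∑ j ∈ Finset.Icc 1 K, P (C n j) :=
            add_le_add (measure_union_le _ _) (measure_biUnion_finset_le _ _)
        _ ≤ (ENNReal.ofReal (F n (b 0)) + ENNReal.ofReal (Hn n)) +
              ∑ j ∈ Finset.Icc 1 K, ENNReal.ofReal (F n (b j) - G n (b j)) := by
            refine add_le_add (add_le_add ?_ ?_) (Finset.sum_le_sum fun j _ => hCb' n j)
            · exact le_of_eq (hPX n (b 0))
            · exact le_of_eq (hPB n)
        _ = ENNReal.ofReal (F n (b 0) + Hn n +
              ∑ j ∈ Finset.Icc 1 K, (F n (b j) - G n (b j))) := by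
            rw [← ENNReal.ofReal_sum_of_nonneg (fun j _ => sub_nonneg.2 (hGF n j)),
              ← ENNReal.ofReal_add (hFnn n (b 0)) (hHnn n),
              ← ENNReal.ofReal_add (by positivity)
                (Finset.sum_nonneg fun j _ => sub_nonneg.2 (hGF n j))]
    -- limits
    have hFt : ∀ i : ℕ, Tendsto (fun n => F n (b i)) atTop
        (nhds ((μm (Set.Iic (b i))).toReal)) := fun i =>
      stmt7_tendsto_apply _ _ hX (by rw [frontier_Iic]; exact hbnull i)
    have hGt : ∀ i : ℕ, Tendsto (fun n => G n (b i)) atTop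
        (nhds ((μm (Set.Iic (b i))).toReal)) := fun i =>
      stmt7_tendsto_apply _ _ hY (by rw [frontier_Iic]; exact hbnull i)
    have hHt : Tendsto Hn atTop (nhds ((μm (Set.Ioi (b K))).toReal)) :=
      stmt7_tendsto_apply _ _ hY (by rw [frontier_Ioi]; exact hbnull K)
    have hrt : Tendsto (fun n => F n (b 0) + Hn n +
        ∑ j ∈ Finset.Icc 1 K, (F n (b j) - G n (b j))) atTop
        (nhds ((μm (Set.Iic (b 0))).toReal + (μm (Set.Ioi (b K))).toReal + 0)) := by
      refine Tendsto.add (Tendsto.add (hFt 0) hHt) ?_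
      have h0 : (0 : ℝ) = ∑ j ∈ Finset.Icc 1 K, (0 : ℝ) := by simp
      rw [h0]
      exact tendsto_finset_sum _ fun j _ => by simpa using (hFt j).sub (hGt j)
    -- the limit is < 2δ
    have hμ0 : (μm (Set.Iic (b 0))).toReal < δ := by
      have h1 : (μm (Set.Iic (b 0))).toReal ≤ (μm (Set.Iic a)).toReal :=
        ENNReal.toReal_mono (measure_ne_top _ _)
          (measure_mono (Set.Iic_subset_Iic.2 hb0a.le))
      have h2 : ProbabilityTheory.cdf μm a = (μm (Set.Iic a)).toReal :=
        ProbabilityTheory.cdf_eq_real μm a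
      linarith
    have hμK : (μm (Set.Ioi (b K))).toReal < δ := by
      have h1 : (μm (Set.Ioi (b K))).toReal ≤ (μm (Set.Ioi a')).toReal :=
        ENNReal.toReal_mono (measure_ne_top _ _)
          (measure_mono (Set.Ioi_subset_Ioi hbKa'))
      have h2 : μm (Set.Ioi a') = μm Set.univ - μm (Set.Iic a') := by
        rw [← Set.compl_Iic]
        exact measure_compl measurableSet_Iic (measure_ne_top _ _)
      have h3 : (μm (Set.Ioi a')).toReal = 1 - (μm (Set.Iic a')).toReal := by
        rw [h2, ENNReal.toReal_sub_of_le (measure_mono (Set.subset_univ _))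
          (measure_ne_top _ _), measure_univ, ENNReal.toReal_one]
      have h4 : ProbabilityTheory.cdf μm a' = (μm (Set.Iic a')).toReal :=
        ProbabilityTheory.cdf_eq_real μm a'
      linarith
    have hLlt : (μm (Set.Iic (b 0))).toReal + (μm (Set.Ioi (b K))).toReal + 0
        < 2 * δ := by linarith
    filter_upwards [hrt.eventually_lt_const hLlt] with n hn
    exact le_trans (hPE n) (ENNReal.ofReal_le_ofReal hn.le)
  -- conclude
  rw [ENNReal.tendsto_nhds_zero]
  intro ε' hε'
  rcases eq_or_ne ε' ⊤ with htop | htop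
  · filter_upwards with n; rw [htop]; exact le_top
  · have hδ : (0 : ℝ) < ε'.toReal / 2 := by
      have := ENNReal.toReal_pos hε'.ne' htop
      positivity
    filter_upwards [key _ hδ] with n hn
    calc P {x | εr ≤ dist (Y n x - X n x) (0 : ℝ)}
        ≤ ENNReal.ofReal (2 * (ε'.toReal / 2)) := hn
      _ = ENNReal.ofReal ε'.toReal := by ring_nf
      _ = ε' := ENNReal.ofReal_toReal htop
end

section
/- Let x, x̃ : ℤ → ℤ be two strictly decreasing particle configurations (x_{n+1} < x_n and x̃_{n+1} < x̃_n for all n) satisfying the gap-domination x_{n−1} − x_n ≥ x̃_{n−1} − x̃_n for all n ∈ ℤ. Fix a label n₀ and define the updated configurations x', x̃' by the exclusion jump rule applied to particle n₀ in both: x'_{n₀} = x_{n₀} + 1 if x_{n₀−1} − x_{n₀} > 1 and x'_{n₀} = x_{n₀} otherwise (all other coordinates unchanged), and analogously for x̃'. Then x' and x̃' are again strictly decreasing and satisfy x'_{n−1} − x'_n ≥ x̃'_{n−1} − x̃'_n for all n ∈ ℤ. Moreover, if x̃_{n₀} jumps (x̃'_{n₀} = x̃_{n₀} + 1) then x_{n₀}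 jumps as well. -/
lemma aux_dec (y y' : ℤ → ℤ) (hy : ∀ n : ℤ, y (n + 1) < y n) (n₀ : ℤ)
    (hy' : ∀ n : ℤ, y' n = if n = n₀ ∧ 1 < y (n₀ - 1) - y n₀ then y n₀ + 1 else y n) :
    ∀ n : ℤ, y' (n + 1) < y' n := by
  intro n
  rw [hy' (n + 1), hy' n]
  by_cases h1 : n + 1 = n₀
  · have hne : ¬ (n = n₀) := by omega
    have hn : n = n₀ - 1 := by omega
    have hy1 := hy (n₀ - 1)
    rw [sub_add_cancel] at hy1
    subst hn
    simp only [h1, hne, false_and, if_false, true_and]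
    split_ifs with h
    · omega
    · exact hy1
  · by_cases h2 : n = n₀
    · simp only [h1, h2, false_and, if_false, eq_self_iff_true, true_and]
      have hne1 : ¬ (n₀ + 1 = n₀ ∧ 1 < y (n₀ - 1) - y n₀) := fun hh => by omega
      rw [if_neg hne1]
      split_ifs with h
      · have := hy n₀; omega
      · exact hy n₀
    · simp only [h1, h2, false_and, if_false]
      exact hy n

theorem stmt8 (x xt : ℤ → ℤ)
    (hx : ∀ n : ℤ, x (n + 1) < x n) (hxt : ∀ n : ℤ, xt (n + 1) < xt n)
    (hgap : ∀ n : ℤ, xt (n - 1) - xt n ≤ x (n - 1) - x n)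
    (n₀ : ℤ) (x' xt' : ℤ → ℤ)
    (hx' : ∀ n : ℤ, x' n = if n = n₀ ∧ 1 < x (n₀ - 1) - x n₀ then x n₀ + 1 else x n)
    (hxt' : ∀ n : ℤ, xt' n = if n = n₀ ∧ 1 < xt (n₀ - 1) - xt n₀ then xt n₀ + 1 else xt n) :
    (∀ n : ℤ, x' (n + 1) < x' n) ∧ (∀ n : ℤ, xt' (n + 1) < xt' n) ∧
    (∀ n : ℤ, xt' (n - 1) - xt' n ≤ x' (n - 1) - x' n) ∧
    (xt' n₀ = xt n₀ + 1 → x' n₀ = x n₀ + 1) := by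
  have hxn : xt n₀ < xt (n₀ - 1) := by have := hxt (n₀ - 1); rwa [sub_add_cancel] at this
  have hxn' : x n₀ < x (n₀ - 1) := by have := hx (n₀ - 1); rwa [sub_add_cancel] at this
  refine ⟨aux_dec x x' hx n₀ hx', aux_dec xt xt' hxt n₀ hxt', ?_, ?_⟩
  · intro n
    rw [hx' (n - 1), hx' n, hxt' (n - 1), hxt' n]
    by_cases h1 : n = n₀
    · have hne : ¬ (n - 1 = n₀) := by omega
      simp only [h1, hne, false_and, if_false, eq_self_iff_true, true_and]
      have hne1 : ¬ (n₀ - 1 = n₀ ∧ 1 < xt (n₀ - 1) - xt n₀) := fun hh => by omega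
      have hne2 : ¬ (n₀ - 1 = n₀ ∧ 1 < x (n₀ - 1) - x n₀) := fun hh => by omega
      rw [if_neg hne1, if_neg hne2]
      have hg := hgap n₀
      split_ifs with ha hb hb <;> omega
    · by_cases h2 : n - 1 = n₀
      · have hn : n = n₀ + 1 := by omega
        subst hn
        have hg := hgap (n₀ + 1)
        rw [add_sub_cancel_right] at hg
        have hg0 := hgap n₀
        simp only [h1, h2, false_and, if_false, true_and, add_sub_cancel_right,
          eq_self_iff_true]
        split_ifs with ha hb hb <;> omega
      · simp only [h1, h2, false_and, if_false]
        exact hgap n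
  · intro h
    rw [hxt' n₀] at h
    rw [hx' n₀]
    simp only [eq_self_iff_true, true_and] at h ⊢
    have hg := hgap n₀
    split_ifs with ha
    · rfl
    · split_ifs at h with hc <;> omega
end

section
/- Let x, x̃ : ℤ → ℤ be strictly decreasing configurations with x_{n−1} − x_n ≥ x̃_{n−1} − x̃_n for all n. Let (n₁, …, n_m) be any finite sequence of labels, and evolve both configurations by applying the exclusion jump rule (particle n_j advances by 1 iff its right gap exceeds 1) to label n_j at step j, in both configurations simultaneously. Then for every label N and every pair of step indices 0 ≤ j ≤ k ≤ m, the number of jumps performed by particle N in x during steps j+1,…,k is at least the number of jumps performed by particle N in x̃ during the same steps. In particular, writing x^{(k)} for the configuration after k steps, x^{(k)}_N − x^{(j)}_N ≥ x̃^{(k)}_N − x̃^{(j)}_N. -/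
/-- One exclusion-process update: the particle with label `n₀` advances by `1`
iff the gap to its right neighbour (label `n₀ - 1`) exceeds `1`. -/
def tasepStep (x : ℤ → ℤ) (n₀ : ℤ) : ℤ → ℤ :=
  fun n => if n = n₀ ∧ 1 < x (n₀ - 1) - x n₀ then x n₀ + 1 else x n

lemma step_eq (x : ℤ → ℤ) (n₀ n : ℤ) :
    tasepStep x n₀ n = if n = n₀ ∧ 1 < x (n₀ - 1) - x n₀ then x n₀ + 1 else x n := rfl

lemma step_of_ne (x : ℤ → ℤ) (n₀ n : ℤ) (h : n ≠ n₀) : tasepStep x n₀ n = x n := by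
  rw [step_eq, if_neg (fun hh => h hh.1)]

lemma step_pos (x : ℤ → ℤ) (n₀ : ℤ) (h : 1 < x (n₀ - 1) - x n₀) :
    tasepStep x n₀ n₀ = x n₀ + 1 := by
  rw [step_eq, if_pos ⟨rfl, h⟩]

lemma step_neg (x : ℤ → ℤ) (n₀ : ℤ) (h : ¬ 1 < x (n₀ - 1) - x n₀) :
    tasepStep x n₀ n₀ = x n₀ := by
  rw [step_eq, if_neg (fun hh => h hh.2)]

lemma step_dec (x : ℤ → ℤ) (n₀ : ℤ) (hx : ∀ n : ℤ, x (n + 1) < x n) :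
    ∀ n : ℤ, tasepStep x n₀ (n + 1) < tasepStep x n₀ n := by
  intro n
  rcases eq_or_ne n n₀ with rfl | hne
  · rw [step_of_ne x n (n + 1) (by omega)]
    have h1 := hx n
    by_cases hc : 1 < x (n - 1) - x n
    · rw [step_pos x n hc]; omega
    · rw [step_neg x n hc]; omega
  · rw [step_of_ne x n₀ n hne]
    rcases eq_or_ne (n + 1) n₀ with h | h
    · rw [← h]
      have hr : n + 1 - 1 = n := by ring
      by_cases hc : 1 < x (n + 1 - 1) - x (n + 1)
      · rw [step_pos x (n + 1) hc]; rw [hr] at hc; omega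
      · rw [step_neg x (n + 1) hc]; exact hx n
    · rw [step_of_ne x n₀ (n + 1) h]; exact hx n

lemma step_gap (x xt : ℤ → ℤ) (n₀ : ℤ)
    (hgap : ∀ n : ℤ, xt (n - 1) - xt n ≤ x (n - 1) - x n) :
    ∀ n : ℤ, tasepStep xt n₀ (n - 1) - tasepStep xt n₀ n ≤
      tasepStep x n₀ (n - 1) - tasepStep x n₀ n := by
  intro n
  have hg0 := hgap n₀
  rcases eq_or_ne n n₀ with rfl | hne
  · have hg := hgap n
    rw [step_of_ne x n (n - 1) (by omega), step_of_ne xt n (n - 1) (by omega)]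
    by_cases hcx : 1 < x (n - 1) - x n <;> by_cases hct : 1 < xt (n - 1) - xt n
    · rw [step_pos x n hcx, step_pos xt n hct]; omega
    · rw [step_pos x n hcx, step_neg xt n hct]; omega
    · rw [step_neg x n hcx, step_pos xt n hct]; omega
    · rw [step_neg x n hcx, step_neg xt n hct]; omega
  · rcases eq_or_ne (n - 1) n₀ with h | h
    · rw [h, step_of_ne x n₀ n hne, step_of_ne xt n₀ n hne]
      have hg := hgap n
      rw [h] at hg
      by_cases hcx : 1 < x (n₀ - 1) - x n₀ <;> by_cases hct : 1 < xt (n₀ - 1) - xt n₀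
      · rw [step_pos x n₀ hcx, step_pos xt n₀ hct]; omega
      · rw [step_pos x n₀ hcx, step_neg xt n₀ hct]; omega
      · rw [step_neg x n₀ hcx, step_pos xt n₀ hct]; omega
      · rw [step_neg x n₀ hcx, step_neg xt n₀ hct]; omega
    · rw [step_of_ne x n₀ n hne, step_of_ne xt n₀ n hne,
          step_of_ne x n₀ (n - 1) h, step_of_ne xt n₀ (n - 1) h]
      exact hgap n

lemma step_inc (x xt : ℤ → ℤ) (n₀ : ℤ)
    (hgap : ∀ n : ℤ, xt (n - 1) - xt n ≤ x (n - 1) - x n) :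
    ∀ N : ℤ, tasepStep xt n₀ N - xt N ≤ tasepStep x n₀ N - x N := by
  intro N
  have hg := hgap n₀
  rcases eq_or_ne N n₀ with rfl | hne
  · by_cases hcx : 1 < x (N - 1) - x N <;> by_cases hct : 1 < xt (N - 1) - xt N
    · rw [step_pos x N hcx, step_pos xt N hct]; omega
    · rw [step_pos x N hcx, step_neg xt N hct]; omega
    · rw [step_neg x N hcx, step_pos xt N hct]; omega
    · rw [step_neg x N hcx, step_neg xt N hct]; omega
  · rw [step_of_ne x n₀ N hne, step_of_ne xt n₀ N hne]; omega

theorem stmt10 (x xt : ℤ → ℤ)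
    (hx : ∀ n : ℤ, x (n + 1) < x n) (hxt : ∀ n : ℤ, xt (n + 1) < xt n)
    (hgap : ∀ n : ℤ, xt (n - 1) - xt n ≤ x (n - 1) - x n)
    (m : ℕ) (ns : ℕ → ℤ)
    (X Xt : ℕ → ℤ → ℤ)
    (hX0 : X 0 = x) (hXt0 : Xt 0 = xt)
    (hXs : ∀ j < m, X (j + 1) = tasepStep (X j) (ns j))
    (hXts : ∀ j < m, Xt (j + 1) = tasepStep (Xt j) (ns j)) :
    ∀ N : ℤ, ∀ j k : ℕ, j ≤ k → k ≤ m →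
      Xt k N - Xt j N ≤ X k N - X j N := by
  have inv : ∀ k, k ≤ m →
      (∀ n : ℤ, X k (n + 1) < X k n) ∧ (∀ n : ℤ, Xt k (n + 1) < Xt k n) ∧
      (∀ n : ℤ, Xt k (n - 1) - Xt k n ≤ X k (n - 1) - X k n) := by
    intro k
    induction k with
    | zero => intro _; rw [hX0, hXt0]; exact ⟨hx, hxt, hgap⟩
    | succ k ih =>
      intro hk
      have hk' : k ≤ m := Nat.le_of_succ_le hk
      have hkm : k < m := hk
      obtain ⟨h1, h2, h3⟩ := ih hk'
      rw [hXs k hkm, hXts k hkm]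
      exact ⟨step_dec _ _ h1, step_dec _ _ h2, step_gap _ _ _ h3⟩
  intro N j k hjk hkm
  induction k with
  | zero =>
    have : j = 0 := Nat.le_zero.mp hjk
    subst this; omega
  | succ k ih =>
    have hkm' : k ≤ m := Nat.le_of_succ_le hkm
    have hk : k < m := hkm
    rcases Nat.lt_or_ge j (k + 1) with hj | hj
    · have hjk' : j ≤ k := Nat.lt_succ_iff.mp hj
      have step : Xt (k + 1) N - Xt k N ≤ X (k + 1) N - X k N := by
        obtain ⟨_, _, h3⟩ := inv k hkm'
        rw [hXs k hk, hXts k hk]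
        exact step_inc _ _ _ h3 N
      have := ih hjk' hkm'
      omega
    · have : j = k + 1 := le_antisymm hjk hj
      subst this; omega
end
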